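/- If every step of the block elimination satisfies the Sum criterion with α = 1, then the growth factor on tile norms is at most linear in the number of tiles: max_{i,j,k} ‖A_{i,j}^(k)‖₁ / max_{i,j} ‖A_{i,j}‖₁ ≤ n. -/

import Mathlib

/-!
Column by column, the Sum criterion makes the elimination non-expansive in tile norms. At step `k`
the updated tile `A_{i,j} - A_{i,k} A_{k,k}⁻¹ A_{k,j}` gains at most
`‖A_{i,k}‖ ‖A_{k,k}⁻¹‖ ‖A_{k,j}‖`, and summed over `i > k` these gains are at most `‖A_{k,j}‖`,
the norm of the tile that leaves the active part. Hence the column sum of tile norms over the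
active rows never increases. A tile is frozen once it leaves the active part, so every tile ever
produced is bounded by an initial column sum, i.e. by `n` times the largest initial tile norm.
-/

/-- The induced matrix 1-norm (maximum absolute column sum). -/
noncomputable def norm1 {ι κ : Type*} [Fintype ι] [Fintype κ] (M : Matrix ι κ ℝ) : ℝ :=
  ⨆ j, ∑ i, |M i j|

open Finset

attribute [local instance] Matrix.linftyOpNormedAddCommGroup

section Norm1

variable {ι κ μ : Type*} [Fintype ι] [Fintype κ] [Fintype μ]

theorem norm1_eq_norm_transpose (M : Matrix ι κ ℝ) : norm1 M = ‖M.transpose‖ := by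
  have hcol : ∀ j, ‖WithLp.toLp 1 (M.transpose j)‖ = ∑ i, |M i j| := fun j => by
    simp [PiLp.norm_eq_of_L1]
  refine le_antisymm (Real.iSup_le (fun j => ?_) (norm_nonneg _)) ?_
  · rw [← hcol]
    exact norm_le_pi_norm (fun j => WithLp.toLp 1 (M.transpose j)) j
  · refine (pi_norm_le_iff_of_nonneg (x := fun j => WithLp.toLp 1 (M.transpose j))
      (Real.iSup_nonneg fun _ => sum_nonneg fun _ _ => abs_nonneg _)).2 fun j => ?_
    rw [hcol]
    exact le_ciSup (f := fun j => ∑ i, |M i j|) (Finite.bddAbove_range _) j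

theorem norm1_nonneg (M : Matrix ι κ ℝ) : 0 ≤ norm1 M := by
  rw [norm1_eq_norm_transpose]
  exact norm_nonneg _

theorem norm1_sub_le (M N : Matrix ι κ ℝ) : norm1 (M - N) ≤ norm1 M + norm1 N := by
  simpa only [norm1_eq_norm_transpose, Matrix.transpose_sub] using norm_sub_le _ _

theorem norm1_mul_le (M : Matrix ι κ ℝ) (N : Matrix κ μ ℝ) :
    norm1 (M * N) ≤ norm1 M * norm1 N := by
  rw [norm1_eq_norm_transpose, norm1_eq_norm_transpose, norm1_eq_norm_transpose,
    Matrix.transpose_mul, mul_comm]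
  exact Matrix.linfty_opNorm_mul _ _

theorem sum_norm1_schur_update_le {σ : Type*} (s : Finset σ) (X : σ → Matrix ι κ ℝ)
    (L : σ → Matrix ι μ ℝ) (P : Matrix μ μ ℝ) (U : Matrix μ κ ℝ)
    (hcrit : ∑ i ∈ s, norm1 (L i) ≤ (norm1 P)⁻¹) :
    ∑ i ∈ s, norm1 (X i - L i * P * U) ≤ ∑ i ∈ s, norm1 (X i) + norm1 U := by
  have hLP : (∑ i ∈ s, norm1 (L i)) * norm1 P ≤ 1 := by
    rcases (norm1_nonneg P).eq_or_lt with hP | hP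
    · simp [← hP]
    · exact (le_div_iff₀ hP).1 (by rwa [one_div])
  have hterm (i : σ) (_ : i ∈ s) :
      norm1 (X i - L i * P * U) ≤ norm1 (X i) + norm1 (L i) * norm1 P * norm1 U := by
    have hmul : norm1 (L i * P * U) ≤ norm1 (L i) * norm1 P * norm1 U :=
      (norm1_mul_le _ _).trans (mul_le_mul_of_nonneg_right (norm1_mul_le _ _) (norm1_nonneg _))
    linarith [norm1_sub_le (X i) (L i * P * U)]
  calc ∑ i ∈ s, norm1 (X i - L i * P * U)
      ≤ ∑ i ∈ s, (norm1 (X i) + norm1 (L i) * norm1 P * norm1 U) := sum_le_sum hterm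
    _ = ∑ i ∈ s, norm1 (X i) + (∑ i ∈ s, norm1 (L i)) * norm1 P * norm1 U := by
      rw [sum_add_distrib, sum_mul, sum_mul]
    _ ≤ ∑ i ∈ s, norm1 (X i) + norm1 U := by
      gcongr
      exact mul_le_of_le_one_left (norm1_nonneg U) hLP

end Norm1

theorem apply_eq_apply_min {α : Type*} {n : ℕ} {A : ℕ → Fin n → Fin n → α}
    (hfix : ∀ k : Fin n, ∀ i j, ¬(k < i ∧ k < j) → A (k.val + 1) i j = A k.val i j)
    {K : ℕ} (hK : K ≤ n) (i j : Fin n) : A K i j = A (min K (min i.val j.val)) i j := by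
  induction K with
  | zero => simp
  | succ k ih =>
    by_cases hk : k < min i.val j.val
    · rw [show min (k + 1) (min i.val j.val) = k + 1 by omega]
    · rw [hfix ⟨k, hK⟩ i j (by simp only [Fin.lt_def]; omega), ih (by omega),
        show min (k + 1) (min i.val j.val) = min k (min i.val j.val) by omega]

section Elimination

variable {n nb : ℕ} {A : ℕ → Fin n → Fin n → Matrix (Fin nb) (Fin nb) ℝ}

noncomputable def activeColNorm (A : ℕ → Fin n → Fin n → Matrix (Fin nb) (Fin nb) ℝ)
    (m : ℕ) (j : Fin n) : ℝ :=
  ∑ i ∈ univ.filter (fun i : Fin n => m ≤ i.val), norm1 (A m i j)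

variable
    (hupd : ∀ k : Fin n, ∀ i j : Fin n,
      A (k.val + 1) i j =
        if k < i ∧ k < j then
          A k.val i j - A k.val i k * (A k.val k k)⁻¹ * A k.val k j
        else A k.val i j)
    (hcrit : ∀ k : Fin n,
      ∑ i ∈ Finset.univ.filter (fun i => k < i), norm1 (A k.val i k)
        ≤ (norm1 ((A k.val k k)⁻¹))⁻¹)
include hupd hcrit

theorem activeColNorm_succ_le (m : ℕ) (j : Fin n) :
    activeColNorm A (m + 1) j ≤ activeColNorm A m j := by
  rcases lt_or_ge m n with hm | hm
  · obtain ⟨k, rfl⟩ : ∃ k : Fin n, k.val = m := ⟨⟨m, hm⟩, rfl⟩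
    have hIoi : univ.filter (fun i : Fin n => k.val + 1 ≤ i.val) = univ.filter (k < ·) :=
      filter_congr fun i _ => Fin.lt_def.symm
    have hIci :
        univ.filter (fun i : Fin n => k.val ≤ i.val) = insert k (univ.filter (k < ·)) := by
      ext i
      simp only [mem_filter, mem_univ, true_and, mem_insert, Fin.lt_def, Fin.ext_iff]
      omega
    rw [activeColNorm, activeColNorm, hIoi, hIci, sum_insert (by simp),
      add_comm (norm1 (A k k j))]
    by_cases hkj : k < j
    · calc ∑ i ∈ univ.filter (k < ·), norm1 (A (k.val + 1) i j)
          = ∑ i ∈ univ.filter (k < ·),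
              norm1 (A k i j - A k i k * (A k k k)⁻¹ * A k k j) :=
            sum_congr rfl fun i hi => by rw [hupd, if_pos ⟨(mem_filter.1 hi).2, hkj⟩]
        _ ≤ _ := sum_norm1_schur_update_le _ _ _ _ _ (hcrit k)
    · calc ∑ i ∈ univ.filter (k < ·), norm1 (A (k.val + 1) i j)
          = ∑ i ∈ univ.filter (k < ·), norm1 (A k i j) :=
            sum_congr rfl fun i _ => by rw [hupd, if_neg fun h => hkj h.2]
        _ ≤ _ := le_add_of_nonneg_right (norm1_nonneg _)
  · have hempty : univ.filter (fun i : Fin n => m + 1 ≤ i.val) = ∅ :=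
      filter_false_of_mem fun i _ => by omega
    rw [activeColNorm, hempty, sum_empty]
    exact sum_nonneg fun _ _ => norm1_nonneg _

theorem antitone_activeColNorm (j : Fin n) : Antitone (activeColNorm A · j) :=
  antitone_nat_of_succ_le fun m => activeColNorm_succ_le hupd hcrit m j

theorem norm1_le_initial_colSum {K : ℕ} (hK : K ≤ n) (i j : Fin n) :
    norm1 (A K i j) ≤ ∑ i', norm1 (A 0 i' j) := by
  set m := min K (min i.val j.val)
  rw [apply_eq_apply_min (A := A) (fun k i j h => by rw [hupd, if_neg h]) hK]
  calc norm1 (A m i j) ≤ activeColNorm A m j :=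
        single_le_sum (f := fun i' => norm1 (A m i' j)) (fun _ _ => norm1_nonneg _)
          (by simp [m])
    _ ≤ activeColNorm A 0 j := antitone_activeColNorm hupd hcrit j (Nat.zero_le m)
    _ = ∑ i', norm1 (A 0 i' j) := by simp [activeColNorm]

end Elimination

theorem sum_criterion_growth_factor_general
    {n nb : ℕ}
    (A : ℕ → Fin n → Fin n → Matrix (Fin nb) (Fin nb) ℝ)
    (hupd : ∀ k : Fin n, ∀ i j : Fin n,
      A (k.val + 1) i j =
        if k < i ∧ k < j then
          A k.val i j - A k.val i k * (A k.val k k)⁻¹ * A k.val k j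
        else A k.val i j)
    (hcrit : ∀ k : Fin n,
      ∑ i ∈ Finset.univ.filter (fun i => k < i), norm1 (A k.val i k)
        ≤ (norm1 ((A k.val k k)⁻¹))⁻¹) :
    (⨆ k : Fin (n + 1), ⨆ i, ⨆ j, norm1 (A k.val i j)) /
        (⨆ i, ⨆ j, norm1 (A 0 i j)) ≤ (n : ℝ) := by
  set M₀ := ⨆ i, ⨆ j, norm1 (A 0 i j)
  have hM₀ : 0 ≤ M₀ := Real.iSup_nonneg fun _ => Real.iSup_nonneg fun _ => norm1_nonneg _
  have hcol (j : Fin n) : ∑ i, norm1 (A 0 i j) ≤ n * M₀ := by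
    simpa using sum_le_card_nsmul univ (fun i => norm1 (A 0 i j)) M₀ fun i _ =>
      le_ciSup_of_le (Finite.bddAbove_range _) i
        (le_ciSup (f := fun j => norm1 (A 0 i j)) (Finite.bddAbove_range _) j)
  have hbound : 0 ≤ (n : ℝ) * M₀ := mul_nonneg n.cast_nonneg hM₀
  refine div_le_of_le_mul₀ hM₀ n.cast_nonneg <| Real.iSup_le (fun k => ?_) hbound
  refine Real.iSup_le (fun i => Real.iSup_le (fun j => ?_) hbound) hbound
  exact (norm1_le_initial_colSum hupd hcrit (Nat.lt_succ_iff.mp k.isLt) i j).trans (hcol j)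

/-- If every step of the block elimination satisfies the Sum criterion with `α = 1`,
then the growth factor on tile norms is at most `n`, the number of tile rows. -/
theorem sum_criterion_growth_factor
    {n nb : ℕ}
    (A : ℕ → Fin n → Fin n → Matrix (Fin nb) (Fin nb) ℝ)
    (hinv : ∀ k : Fin n, IsUnit (A k.val k k))
    (hupd : ∀ k : Fin n, ∀ i j : Fin n,
      A (k.val + 1) i j =
        if k < i ∧ k < j then
          A k.val i j - A k.val i k * (A k.val k k)⁻¹ * A k.val k j
        else A k.val i j)
    (hcrit : ∀ k : Fin n,
      ∑ i ∈ Finset.univ.filter (fun i => k < i), norm1 (A k.val i k)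
        ≤ (norm1 ((A k.val k k)⁻¹))⁻¹) :
    (⨆ k : Fin (n + 1), ⨆ i, ⨆ j, norm1 (A k.val i j)) /
        (⨆ i, ⨆ j, norm1 (A 0 i j)) ≤ (n : ℝ) :=
  sum_criterion_growth_factor_general A hupd hcrit
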